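/- For all integers k ≥ 1 and m ≥ 4 with 2k + 2 ≤ m, z^k(10^m) = 3·5^m·2^{m-2k}. -/

import Mathlib

/-!
Strong divisibility, `gcd (F a) (F b) = F (gcd a b)`, makes `{ℓ | n ∣ F ℓ}` the set of multiples
of `z n`, so that `z (lcm a b) = lcm (z a) (z b)`. The identities
`F (5n) = 5 F n (5 F n ^ 4 ± 5 F n ^ 2 + 1)` and `F (2n) = F n (2 F (n + 1) - F n)`, whose second
factor is twice an odd number once `4 ∣ F n`, give `z (5 ^ a) = 5 ^ a` and
`z (2 ^ e) = 3 * 2 ^ (e - 2)` for `e ≥ 3`. Hence `z (10 ^ m) = 3 * 5 ^ m * 2 ^ (m - 2)`, and from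
then on each application of `z` divides the power of two by `4`: the factor `3` is absorbed,
since `z 3 = 4` divides `z (2 ^ e * 5 ^ m)` for `e ≥ 4`.
-/

/-- The order of appearance of `n` in the Fibonacci sequence: the smallest
positive integer `ℓ` such that `n` divides the `ℓ`-th Fibonacci number. -/
noncomputable def z (n : ℕ) : ℕ := sInf {ℓ : ℕ | 0 < ℓ ∧ n ∣ Nat.fib ℓ}

open Nat

theorem Int.fib_five_mul (m : ℤ) :
    fib (5 * m) = 5 * fib m * (5 * fib m ^ 4 + 5 * (-1) ^ m.natAbs * fib m ^ 2 + 1) := by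
  have hpred : fib (m - 1) = fib (m + 1) - fib m := by
    have := fib_add_two (m - 1)
    rw [show m - 1 + 2 = m + 1 by ring, sub_add_cancel] at this
    linarith
  have h5 := fib_add (4 * m + 1) (m - 1)
  rw [show 4 * m + 1 + (m - 1) = 5 * m by ring, add_sub_cancel_right, sub_add_cancel,
    show 4 * m = 2 * (2 * m) by ring, hpred] at h5
  simp only [fib_two_mul, fib_two_mul_add_one] at h5
  have hcassini := fib_succ_mul_fib_pred_sub_fib_sq m
  rw [hpred] at hcassini
  set s : ℤ := (-1) ^ m.natAbs
  have hs : s ^ 2 = 1 := by rw [← pow_mul, mul_comm, pow_mul]; simp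
  set x := fib m
  set y := fib (m + 1)
  -- `h5` says `fib (5 * m) = 5 * x * (5 * x ^ 4 + 5 * Q * x ^ 2 + Q ^ 2)` with
  -- `Q = y * (y - x) - x ^ 2`, and Cassini's identity says `Q = s`.
  linear_combination h5 + 5 * x * (5 * x ^ 2 + (y * (y - x) - x ^ 2) + s) * hcassini + 5 * x * hs

theorem Nat.fib_five_mul (n : ℕ) : ∃ c : ℤ, (fib (5 * n) : ℤ) = 5 * fib n * (5 * c + 1) := by
  refine ⟨(fib n : ℤ) ^ 4 + (-1) ^ n * (fib n : ℤ) ^ 2, ?_⟩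
  have := Int.fib_five_mul n
  rw [show (5 : ℤ) * n = ((5 * n : ℕ) : ℤ) by push_cast; ring, Int.fib_natCast, Int.fib_natCast,
    Int.natAbs_natCast] at this
  linear_combination this

theorem Nat.fib_five_pow (a : ℕ) : ∃ u : ℤ, (fib (5 ^ a) : ℤ) = 5 ^ a * (5 * u + 1) := by
  induction a with
  | zero => exact ⟨0, by simp⟩
  | succ a ih =>
    obtain ⟨u, hu⟩ := ih
    obtain ⟨c, hc⟩ := fib_five_mul (5 ^ a)
    refine ⟨5 * u * c + u + c, ?_⟩
    rw [pow_succ', hc, hu]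
    ring

theorem Nat.fib_two_mul_of_four_dvd {n : ℕ} (h : 4 ∣ fib n) :
    ∃ c : ℤ, (fib (2 * n) : ℤ) = 2 * fib n * (2 * c + 1) := by
  obtain ⟨i, hi⟩ := h
  obtain ⟨j, hj⟩ : Odd (fib (n + 1)) :=
    coprime_two_left.mp ((fib_coprime_fib_succ n).coprime_dvd_left ⟨2 * i, by omega⟩)
  refine ⟨j - i, ?_⟩
  rw [fib_two_mul, Nat.cast_mul, Nat.cast_sub (fib_le_fib_succ.trans (by omega))]
  push_cast [hi, hj]
  ring

theorem Nat.fib_three_mul_two_pow (b : ℕ) :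
    ∃ u : ℤ, (fib (3 * 2 ^ (b + 1)) : ℤ) = 2 ^ (b + 3) * (2 * u + 1) := by
  induction b with
  | zero => exact ⟨0, by decide⟩
  | succ b ih =>
    obtain ⟨u, hu⟩ := ih
    have h4 : 4 ∣ fib (3 * 2 ^ (b + 1)) :=
      (show 4 ∣ fib 6 by decide).trans (fib_dvd _ _ ⟨2 ^ b, by ring⟩)
    obtain ⟨c, hc⟩ := fib_two_mul_of_four_dvd h4
    refine ⟨2 * u * c + u + c, ?_⟩
    rw [show 3 * 2 ^ (b + 1 + 1) = 2 * (3 * 2 ^ (b + 1)) by ring, hc, hu]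
    ring

theorem pow_dvd_and_not_pow_succ_dvd_of_eq {p a x : ℕ} {u : ℤ} (hp : 1 < p)
    (h : (x : ℤ) = p ^ a * (p * u + 1)) : p ^ a ∣ x ∧ ¬ p ^ (a + 1) ∣ x := by
  refine ⟨Int.natCast_dvd_natCast.mp ⟨_, h⟩, fun hdvd ↦ ?_⟩
  have hZ := Int.natCast_dvd_natCast.mpr hdvd
  push_cast at hZ
  rw [h, pow_succ, mul_dvd_mul_iff_left (by positivity)] at hZ
  have : p ∣ 1 := Int.natCast_dvd_natCast.mp ((dvd_add_right (dvd_mul_right _ _)).mp hZ)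
  exact absurd (Nat.dvd_one.mp this) hp.ne'

theorem z_pos_of_dvd_fib {n ℓ : ℕ} (hℓ : 0 < ℓ) (h : n ∣ fib ℓ) : 0 < z n :=
  (Nat.sInf_mem (s := {ℓ | 0 < ℓ ∧ n ∣ fib ℓ}) ⟨ℓ, hℓ, h⟩).1

theorem dvd_fib_z {n : ℕ} (hn : 0 < z n) : n ∣ fib (z n) :=
  (Nat.sInf_mem (Nat.nonempty_of_pos_sInf hn)).2

theorem dvd_fib_iff_z_dvd {n : ℕ} (hn : 0 < z n) (ℓ : ℕ) : n ∣ fib ℓ ↔ z n ∣ ℓ := by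
  refine ⟨fun h ↦ ?_, fun h ↦ (dvd_fib_z hn).trans (fib_dvd _ _ h)⟩
  have hgcd : n ∣ fib (Nat.gcd (z n) ℓ) := by
    rw [fib_gcd]
    exact Nat.dvd_gcd (dvd_fib_z hn) h
  have hle : z n ≤ Nat.gcd (z n) ℓ := Nat.sInf_le ⟨gcd_pos_of_pos_left ℓ hn, hgcd⟩
  rw [← le_antisymm (Nat.le_of_dvd hn (Nat.gcd_dvd_left _ _)) hle]
  exact Nat.gcd_dvd_right _ _

theorem z_eq_of_minimal {n L : ℕ} (hL : 0 < L) (hdvd : n ∣ fib L)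
    (hmin : ∀ ℓ < L, 0 < ℓ → ¬ n ∣ fib ℓ) : z n = L := by
  have hz := z_pos_of_dvd_fib hL hdvd
  exact le_antisymm (Nat.sInf_le ⟨hL, hdvd⟩) (not_lt.mp fun hlt ↦ hmin _ hlt hz (dvd_fib_z hz))

theorem z_eq_of_forall_dvd_fib_iff {n L : ℕ} (hL : 0 < L) (h : ∀ ℓ, n ∣ fib ℓ ↔ L ∣ ℓ) :
    z n = L :=
  z_eq_of_minimal hL ((h L).2 dvd_rfl) fun ℓ hlt hℓ hdvd ↦
    (Nat.le_of_dvd hℓ ((h ℓ).1 hdvd)).not_gt hlt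

theorem z_lcm {a b : ℕ} (ha : 0 < z a) (hb : 0 < z b) : z (Nat.lcm a b) = Nat.lcm (z a) (z b) :=
  z_eq_of_forall_dvd_fib_iff (Nat.lcm_pos ha hb) fun ℓ ↦ by
    rw [Nat.lcm_dvd_iff, Nat.lcm_dvd_iff, dvd_fib_iff_z_dvd ha, dvd_fib_iff_z_dvd hb]

theorem z_mul_of_coprime_of_z_dvd {a b : ℕ} (hab : Coprime a b) (ha : 0 < z a) (hb : 0 < z b)
    (h : z a ∣ z b) : z (a * b) = z b := by
  rw [← hab.lcm_eq_mul, z_lcm ha hb, Nat.lcm_eq_right h]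

theorem z_prime_mul {p n L : ℕ} (hp : p.Prime) (hL : 0 < L) (hz : z n = L)
    (hdvd : p * n ∣ fib (p * L)) (hndvd : ¬ p * n ∣ fib L) : z (p * n) = p * L := by
  subst hz
  have hpn := z_pos_of_dvd_fib (mul_pos hp.pos hL) hdvd
  obtain ⟨d, hd⟩ : z n ∣ z (p * n) :=
    (dvd_fib_iff_z_dvd hL _).1 ((dvd_mul_left n p).trans (dvd_fib_z hpn))
  have hdp : d ∣ p := by
    have := (dvd_fib_iff_z_dvd hpn _).1 hdvd
    rw [hd, mul_comm p] at this
    exact Nat.dvd_of_mul_dvd_mul_left hL this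
  rcases (Nat.dvd_prime hp).1 hdp with rfl | rfl
  · rw [mul_one] at hd
    exact absurd (hd ▸ dvd_fib_z hpn) hndvd
  · rw [hd, mul_comm]

theorem z_five_pow (a : ℕ) : z (5 ^ a) = 5 ^ a := by
  induction a with
  | zero => exact z_eq_of_minimal one_pos (one_dvd _) (by decide)
  | succ a ih =>
    obtain ⟨u, hu⟩ := fib_five_pow a
    obtain ⟨v, hv⟩ := fib_five_pow (a + 1)
    have hdvd := (pow_dvd_and_not_pow_succ_dvd_of_eq (by norm_num) hv).1
    have hndvd := (pow_dvd_and_not_pow_succ_dvd_of_eq (by norm_num) hu).2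
    rw [pow_succ'] at hdvd hndvd ⊢
    exact z_prime_mul prime_five (by positivity) ih hdvd hndvd

theorem z_two_pow_add_three (b : ℕ) : z (2 ^ (b + 3)) = 3 * 2 ^ (b + 1) := by
  induction b with
  | zero => exact z_eq_of_minimal (by norm_num) (by decide) (by decide)
  | succ b ih =>
    obtain ⟨u, hu⟩ := fib_three_mul_two_pow b
    obtain ⟨v, hv⟩ := fib_three_mul_two_pow (b + 1)
    have hdvd := (pow_dvd_and_not_pow_succ_dvd_of_eq (by norm_num) hv).1
    have hndvd := (pow_dvd_and_not_pow_succ_dvd_of_eq (by norm_num) hu).2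
    rw [show 3 * 2 ^ (b + 1 + 1) = 2 * (3 * 2 ^ (b + 1)) by ring, pow_succ'] at hdvd ⊢
    rw [pow_succ'] at hndvd
    exact z_prime_mul prime_two (by positivity) ih hdvd hndvd

theorem z_two_pow {e : ℕ} (he : 3 ≤ e) : z (2 ^ e) = 3 * 2 ^ (e - 2) := by
  obtain ⟨b, rfl⟩ : ∃ b, e = b + 3 := ⟨e - 3, by omega⟩
  rw [z_two_pow_add_three, show b + 3 - 2 = b + 1 by omega]

theorem z_three : z 3 = 4 :=
  z_eq_of_minimal (by norm_num) (by decide) (by decide)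

theorem z_two_pow_mul_five_pow {e : ℕ} (m : ℕ) (he : 3 ≤ e) :
    z (2 ^ e * 5 ^ m) = 3 * 2 ^ (e - 2) * 5 ^ m := by
  have hcop : Coprime (2 ^ e) (5 ^ m) := Coprime.pow e m (by norm_num)
  have hcop' : Coprime (3 * 2 ^ (e - 2)) (5 ^ m) :=
    Coprime.mul_left (Coprime.pow_right m (by norm_num)) (Coprime.pow _ m (by norm_num))
  rw [← hcop.lcm_eq_mul, z_lcm (by rw [z_two_pow he]; positivity) (by rw [z_five_pow]; positivity),
    z_two_pow he, z_five_pow, hcop'.lcm_eq_mul]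

theorem z_ten_pow {m : ℕ} (hm : 3 ≤ m) : z (10 ^ m) = 3 * 5 ^ m * 2 ^ (m - 2) := by
  rw [show 10 ^ m = 2 ^ m * 5 ^ m by rw [← mul_pow]; rfl, z_two_pow_mul_five_pow m hm]
  ring

theorem z_three_mul_five_pow_mul_two_pow {e : ℕ} (m : ℕ) (he : 4 ≤ e) :
    z (3 * 5 ^ m * 2 ^ e) = 3 * 5 ^ m * 2 ^ (e - 2) := by
  have hcop : Coprime 3 (2 ^ e * 5 ^ m) :=
    Coprime.mul_right (Coprime.pow_right _ (by norm_num)) (Coprime.pow_right _ (by norm_num))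
  have hz := z_two_pow_mul_five_pow m (show 3 ≤ e by omega)
  have h4 : z 3 ∣ z (2 ^ e * 5 ^ m) := by
    rw [z_three, hz]
    exact Dvd.dvd.mul_right (Dvd.dvd.mul_left (pow_dvd_pow 2 (by omega : 2 ≤ e - 2)) 3) _
  rw [show 3 * 5 ^ m * 2 ^ e = 3 * (2 ^ e * 5 ^ m) by ring,
    z_mul_of_coprime_of_z_dvd hcop (by rw [z_three]; norm_num) (by rw [hz]; positivity) h4, hz]
  ring

theorem z_iterate_three_mul_five_pow_mul_two_pow {j e : ℕ} (m : ℕ) (h : 2 * j + 2 ≤ e) :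
    z^[j] (3 * 5 ^ m * 2 ^ e) = 3 * 5 ^ m * 2 ^ (e - 2 * j) := by
  induction j generalizing e with
  | zero => simp
  | succ j ih =>
    rw [Function.iterate_succ_apply, z_three_mul_five_pow_mul_two_pow (e := e) m (by omega),
      ih (by omega), show e - 2 - 2 * j = e - 2 * (j + 1) by omega]

theorem z_iter_ten_pow_general (k m : ℕ) (hk : 1 ≤ k) (h : 2 * k + 2 ≤ m) :
    z^[k] (10 ^ m) = 3 * 5 ^ m * 2 ^ (m - 2 * k) := by
  obtain ⟨j, rfl⟩ : ∃ j, k = j + 1 := ⟨k - 1, by omega⟩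
  rw [Function.iterate_succ_apply, z_ten_pow (by omega),
    z_iterate_three_mul_five_pow_mul_two_pow m (by omega),
    show m - 2 - 2 * j = m - 2 * (j + 1) by omega]

theorem z_iter_ten_pow (k m : ℕ) (hk : 1 ≤ k) (hm : 4 ≤ m) (h : 2 * k + 2 ≤ m) :
    z^[k] (10 ^ m) = 3 * 5 ^ m * 2 ^ (m - 2 * k) :=
  z_iter_ten_pow_general k m hk h
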